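/- Let γ > 2, λ₁ ≥ λ₂ > 0, 0 < Δ₁ ≤ λ₁, 0 < Δ₂ ≤ λ₂, and z ∈ ℝ, and define h(β) := (1/2)(β − z)² + Δ₁·g_{λ₁,γ}(β) + Δ₂·g_{λ₂,γ}(β). Then h has a unique global minimizer over ℝ, equal to the threshold value S(z): S(z) = z if |z| ≥ λ₁γ; S(z) = sgn(z)·(|z| − Δ₁)/(1 − Δ₁/(λ₁γ)) if λ₂γ + Δ₁(1 − λ₂/λ₁) ≤ |z| < λ₁γ; S(z) = sgn(z)·(|z| − Δ₁ − Δ₂)/(1 − Δ₁/(λ₁γ) − Δ₂/(λ₂γ)) if Δ₁ + Δ₂ ≤ |z| < λ₂γ + Δ₁(1 − λ₂/λ₁); and S(z) = 0 if |z| < Δ₁ + Δ₂. (Theorem 3 part (b): closed-form threshold function for the cmenet coordinate descent update.) -/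

import Mathlib

/-- The (scaled) MC+ inner penalty `g_{λ,γ}(β) = ∫_0^{|β|} max(1 − x/(λγ), 0) dx`. -/
noncomputable def mcPlus (lam gam b : ℝ) : ℝ :=
  ∫ x in (0 : ℝ)..|b|, max (1 - x / (lam * gam)) 0

/-- The cmenet threshold function `S_{λ₁,λ₂}(z; Δ₁, Δ₂)` of equation (8). -/
noncomputable def cmenetThreshold (l1 l2 d1 d2 gam z : ℝ) : ℝ :=
  if l1 * gam ≤ |z| then z
  else if l2 * gam + d1 * (1 - l2 / l1) ≤ |z| then
    Real.sign z * (|z| - d1) / (1 - d1 / (l1 * gam))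
  else if d1 + d2 ≤ |z| then
    Real.sign z * (|z| - d1 - d2) / (1 - d1 / (l1 * gam) - d2 / (l2 * gam))
  else 0

lemma mcPlus_eq (lam gam b : ℝ) (h : 0 < lam * gam) :
    mcPlus lam gam b
      = min |b| (lam*gam) - (min |b| (lam*gam))^2 / (2*(lam*gam)) := by
  unfold mcPlus
  set a := lam * gam with ha
  set t := |b| with htdef
  have ht : 0 ≤ t := abs_nonneg b
  set m := min t a with hm
  have hm0 : 0 ≤ m := le_min ht h.le
  have hma : m ≤ a := min_le_right _ _
  have hmt : m ≤ t := min_le_left _ _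
  have hcont : Continuous fun x : ℝ => max (1 - x / a) 0 :=
    (continuous_const.sub (continuous_id.div_const a)).max continuous_const
  have hint : ∀ u v : ℝ, IntervalIntegrable (fun x : ℝ => max (1 - x / a) 0)
      MeasureTheory.volume u v := fun u v => hcont.intervalIntegrable u v
  have hsplit : (∫ x in (0:ℝ)..t, max (1 - x / a) 0)
      = (∫ x in (0:ℝ)..m, max (1 - x / a) 0) + ∫ x in m..t, max (1 - x / a) 0 := by
    rw [intervalIntegral.integral_add_adjacent_intervals (hint 0 m) (hint m t)]
  have h1 : (∫ x in (0:ℝ)..m, max (1 - x / a) 0) = ∫ x in (0:ℝ)..m, (1 - x / a) := by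
    apply intervalIntegral.integral_congr
    intro x hx
    rw [Set.uIcc_of_le hm0] at hx
    have hxa : x ≤ a := le_trans hx.2 hma
    have : 0 ≤ 1 - x / a := by
      have : x / a ≤ 1 := by
        rw [div_le_one h]; exact hxa
      linarith
    simp [max_eq_left this]
  have h2 : (∫ x in m..t, max (1 - x / a) 0) = 0 := by
    rcases le_total t a with hta | hat
    · have : m = t := min_eq_left hta
      rw [this, intervalIntegral.integral_same]
    · have hmeq : m = a := min_eq_right hat
      rw [show (∫ x in m..t, max (1 - x / a) 0) = ∫ x in m..t, (0:ℝ) from ?_,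
        intervalIntegral.integral_zero]
      apply intervalIntegral.integral_congr
      intro x hx
      rw [Set.uIcc_of_le hmt] at hx
      have hxa : a ≤ x := hmeq ▸ hx.1
      have : 1 - x / a ≤ 0 := by
        have : 1 ≤ x / a := by rw [le_div_iff₀ h]; linarith
        linarith
      simp [max_eq_right this]
  have h3 : (∫ x in (0:ℝ)..m, (1 - x / a)) = m - m^2/(2*a) := by
    rw [intervalIntegral.integral_sub (intervalIntegrable_const)
      (((by fun_prop : Continuous fun x : ℝ => x / a)).intervalIntegrable 0 m)]
    simp [intervalIntegral.integral_div, integral_id]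
    ring
  rw [hsplit, h1, h2, h3]; ring

lemma keylem {a S w : ℝ} (β : ℝ) (ha : 0 < a)
    (hw : (|S| ≤ a ∧ |w| ≤ 1 ∧ w*S = |S|) ∨ (a ≤ |S| ∧ w = S/a)) :
    2*a*w*(β-S) - (β^2-S^2) ≤ 2*a*(min |β| a - min |S| a)
      - ((min |β| a)^2 - (min |S| a)^2) := by
  have hb2 : |β|^2 = β^2 := sq_abs β
  have hS2 : |S|^2 = S^2 := sq_abs S
  have hSb : S*β ≤ |S| * |β| := by
    calc S*β ≤ |S*β| := le_abs_self _
    _ = |S| * |β| := abs_mul S β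
  rcases hw with ⟨hSa, hw1, hwS⟩ | ⟨hSa, hwdef⟩
  · have hwb : w*β ≤ |w| * |β| := by
      calc w*β ≤ |w*β| := le_abs_self _
      _ = |w| * |β| := abs_mul w β
    have h1 : w*β ≤ |β| := by nlinarith [mul_nonneg (sub_nonneg.2 hw1) (abs_nonneg β)]
    have h2 : a*(w*S) = a*|S| := by rw [hwS]
    rw [min_eq_left hSa]
    rcases le_total |β| a with hba | hab
    · rw [min_eq_left hba]
      nlinarith [mul_le_mul_of_nonneg_left h1 ha.le]
    · rw [min_eq_right hab]
      nlinarith [mul_le_mul_of_nonneg_left h1 ha.le, sq_nonneg (|β| - a)]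
  · rw [min_eq_right hSa, hwdef]
    have hw2 : 2*a*(S/a)*(β-S) = 2*S*(β-S) := by
      field_simp
    rw [hw2]
    rcases le_total |β| a with hba | hab
    · rw [min_eq_left hba]
      nlinarith [mul_nonneg (sub_nonneg.2 hSa) (sub_nonneg.2 hba), sq_nonneg (|S| - a)]
    · rw [min_eq_right hab]
      nlinarith [sq_nonneg (β - S)]

lemma master (a1 a2 d1 d2 w1 w2 z S β : ℝ)
    (ha1 : 0 < a1) (ha2 : 0 < a2) (hd1 : 0 < d1) (hd2 : 0 < d2)
    (hc : d1/a1 + d2/a2 < 1)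
    (h1 : (|S| ≤ a1 ∧ |w1| ≤ 1 ∧ w1*S = |S|) ∨ (a1 ≤ |S| ∧ w1 = S/a1))
    (h2 : (|S| ≤ a2 ∧ |w2| ≤ 1 ∧ w2*S = |S|) ∨ (a2 ≤ |S| ∧ w2 = S/a2))
    (hstat : z = (1 - d1/a1 - d2/a2)*S + d1*w1 + d2*w2)
    (hβ : β ≠ S) :
    1/2*(S-z)^2 + d1*(min |S| a1 - (min |S| a1)^2/(2*a1))
        + d2*(min |S| a2 - (min |S| a2)^2/(2*a2))
      < 1/2*(β-z)^2 + d1*(min |β| a1 - (min |β| a1)^2/(2*a1))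
        + d2*(min |β| a2 - (min |β| a2)^2/(2*a2)) := by
  have ha1' : a1 ≠ 0 := ne_of_gt ha1
  have ha2' : a2 ≠ 0 := ne_of_gt ha2
  have K1 := keylem β ha1 h1
  have K2 := keylem β ha2 h2
  set c1 := d1/(2*a1) with hc1def
  set c2 := d2/(2*a2) with hc2def
  have hc1 : 0 < c1 := by positivity
  have hc2 : 0 < c2 := by positivity
  have hd1e : d1 = 2*c1*a1 := by rw [hc1def]; field_simp
  have hd2e : d2 = 2*c2*a2 := by rw [hc2def]; field_simp
  have hrw1 : ∀ x : ℝ, d1*(x - x^2/(2*a1)) = c1 * (2*a1*x - x^2) := by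
    intro x; rw [hc1def]; field_simp; try ring; tauto
  have hrw2 : ∀ x : ℝ, d2*(x - x^2/(2*a2)) = c2 * (2*a2*x - x^2) := by
    intro x; rw [hc2def]; field_simp; try ring; tauto
  rw [hrw1, hrw1, hrw2, hrw2]
  have hcc : 2*c1 + 2*c2 < 1 := by
    have e1 : d1/a1 = 2*c1 := by rw [hc1def]; field_simp
    have e2 : d2/a2 = 2*c2 := by rw [hc2def]; field_simp
    rw [e1, e2] at hc; linarith
  have P1 : c1*(2*a1*w1*(β-S) - (β^2-S^2))
      ≤ c1*(2*a1*(min |β| a1 - min |S| a1) - ((min |β| a1)^2 - (min |S| a1)^2)) :=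
    mul_le_mul_of_nonneg_left K1 hc1.le
  have P2 : c2*(2*a2*w2*(β-S) - (β^2-S^2))
      ≤ c2*(2*a2*(min |β| a2 - min |S| a2) - ((min |β| a2)^2 - (min |S| a2)^2)) :=
    mul_le_mul_of_nonneg_left K2 hc2.le
  have hsq : 0 < (β - S)^2 := by
    have : β - S ≠ 0 := sub_ne_zero.2 hβ
    positivity
  have hEq : 1/2*(β-z)^2 - 1/2*(S-z)^2 + (2*c1*a1*w1)*(β-S) + (2*c2*a2*w2)*(β-S)
      - (c1+c2)*(β^2-S^2) = (1/2 - c1 - c2)*(β-S)^2 := by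
    rw [hstat, hd1e, hd2e]
    have e1 : 2*c1*a1/a1 = 2*c1 := by field_simp
    have e2 : 2*c2*a2/a2 = 2*c2 := by field_simp
    rw [e1, e2]; ring
  have hpos : 0 < (1/2 - c1 - c2)*(β-S)^2 := mul_pos (by linarith) hsq
  linarith [P1, P2, hEq, hpos]

lemma sign_mul_abs' (z : ℝ) : Real.sign z * |z| = z := by
  rcases lt_trichotomy z 0 with h | h | h
  · rw [Real.sign_of_neg h, abs_of_neg h]; ring
  · simp [h]
  · rw [Real.sign_of_pos h, abs_of_pos h]; ring

set_option maxHeartbeats 1000000 in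
/-- Theorem 3(b): the majorized coordinate-wise objective
`h(β) = (1/2)(β − z)² + Δ₁·g_{λ₁,γ}(β) + Δ₂·g_{λ₂,γ}(β)` has a unique global
minimizer over ℝ, given in closed form by the threshold function `S(z)`. -/
theorem threshold_unique_minimizer (gam l1 l2 d1 d2 z : ℝ)
    (hgam : 2 < gam) (hl2 : 0 < l2) (hl12 : l2 ≤ l1)
    (hd1 : 0 < d1) (hd1' : d1 ≤ l1) (hd2 : 0 < d2) (hd2' : d2 ≤ l2) :
    ∀ β : ℝ, β ≠ cmenetThreshold l1 l2 d1 d2 gam z →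
      1 / 2 * (cmenetThreshold l1 l2 d1 d2 gam z - z) ^ 2
          + d1 * mcPlus l1 gam (cmenetThreshold l1 l2 d1 d2 gam z)
          + d2 * mcPlus l2 gam (cmenetThreshold l1 l2 d1 d2 gam z)
        < 1 / 2 * (β - z) ^ 2 + d1 * mcPlus l1 gam β + d2 * mcPlus l2 gam β := by
  intro β hβ
  have hgam0 : 0 < gam := by linarith
  have hl1 : 0 < l1 := lt_of_lt_of_le hl2 hl12
  have hl1' : l1 ≠ 0 := ne_of_gt hl1
  have ha1 : 0 < l1 * gam := by positivity
  have ha2 : 0 < l2 * gam := by positivity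
  have ha21 : l2 * gam ≤ l1 * gam := mul_le_mul_of_nonneg_right hl12 hgam0.le
  have hfr1 : d1/(l1*gam) ≤ 1/gam := by
    rw [div_le_div_iff₀ ha1 hgam0]; nlinarith
  have hfr2 : d2/(l2*gam) ≤ 1/gam := by
    rw [div_le_div_iff₀ ha2 hgam0]; nlinarith
  have hgfr : (1:ℝ)/gam + 1/gam < 1 := by
    rw [show (1:ℝ)/gam + 1/gam = 2/gam by ring, div_lt_one hgam0]; linarith
  have hc : d1/(l1*gam) + d2/(l2*gam) < 1 := by linarith
  have e1 : ∀ b, mcPlus l1 gam b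
      = min |b| (l1*gam) - (min |b| (l1*gam))^2 / (2*(l1*gam)) :=
    fun b => mcPlus_eq l1 gam b ha1
  have e2 : ∀ b, mcPlus l2 gam b
      = min |b| (l2*gam) - (min |b| (l2*gam))^2 / (2*(l2*gam)) :=
    fun b => mcPlus_eq l2 gam b ha2
  simp only [e1, e2]
  by_cases H1 : l1 * gam ≤ |z|
  · -- Case 1 : S = z
    have hSeq : cmenetThreshold l1 l2 d1 d2 gam z = z := by
      unfold cmenetThreshold; rw [if_pos H1]
    rw [hSeq] at hβ ⊢
    exact master (l1*gam) (l2*gam) d1 d2 (z/(l1*gam)) (z/(l2*gam)) z z β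
      ha1 ha2 hd1 hd2 hc
      (Or.inr ⟨H1, rfl⟩) (Or.inr ⟨le_trans ha21 H1, rfl⟩)
      (by field_simp; ring) hβ
  · by_cases H2 : l2 * gam + d1 * (1 - l2 / l1) ≤ |z|
    · -- Case 2
      have hd1l2 : d1 * (l2 / l1) ≤ l2 := by
        rw [mul_div_assoc', div_le_iff₀ hl1]; nlinarith
      have hzd : d1 < |z| := by nlinarith
      have hz0 : z ≠ 0 := by
        intro h; rw [h, abs_zero] at hzd; linarith
      set s := Real.sign z with hsdef
      have hsz : s * |z| = z := sign_mul_abs' z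
      have hs : s = -1 ∨ s = 1 := Real.sign_apply_eq_of_ne_zero z hz0
      have hss : s * s = 1 := by rcases hs with h | h <;> rw [h] <;> norm_num
      have hs1 : |s| = 1 := by rcases hs with h | h <;> rw [h] <;> norm_num
      have hden : 0 < 1 - d1/(l1*gam) := by
        have : (1:ℝ)/gam < 1 := by linarith
        linarith
      set S := s * (|z| - d1) / (1 - d1/(l1*gam)) with hSdef2
      have hSeq : cmenetThreshold l1 l2 d1 d2 gam z = S := by
        unfold cmenetThreshold; rw [if_neg H1, if_pos H2]
      rw [hSeq] at hβ ⊢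
      have habsS : |S| = (|z| - d1) / (1 - d1/(l1*gam)) := by
        rw [hSdef2, abs_div, abs_mul, hs1, one_mul, abs_of_pos (by linarith : 0 < |z| - d1),
          abs_of_pos hden]
      have hzlt : |z| < l1 * gam := not_le.mp H1
      have exp1 : (l1*gam) * (1 - d1/(l1*gam)) = l1*gam - d1 := by
        field_simp
      have hS1 : |S| ≤ l1 * gam := by
        rw [habsS, div_le_iff₀ hden]; nlinarith
      have exp2 : (l2*gam) * (1 - d1/(l1*gam)) = l2*gam - d1*(l2/l1) := by
        field_simp
      have hS2 : l2 * gam ≤ |S| := by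
        rw [habsS, le_div_iff₀ hden]; nlinarith
      have hwS : s * S = |S| := by
        rw [habsS, hSdef2, show s * (s * (|z| - d1) / (1 - d1/(l1*gam)))
          = (s*s) * ((|z| - d1) / (1 - d1/(l1*gam))) by ring, hss, one_mul]
      have hstat : z = (1 - d1/(l1*gam) - d2/(l2*gam))*S + d1*s + d2*(S/(l2*gam)) := by
        have k1 : (1 - d1/(l1*gam) - d2/(l2*gam))*S + d1*s + d2*(S/(l2*gam))
            = (1 - d1/(l1*gam))*S + d1*s := by ring
        have k2 : (1 - d1/(l1*gam))*S = s*(|z| - d1) := by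
          rw [hSdef2, mul_comm, div_mul_cancel₀ _ (ne_of_gt hden)]
        rw [k1, k2, show s*(|z| - d1) + d1*s = s*|z| by ring, hsz]
      exact master (l1*gam) (l2*gam) d1 d2 s (S/(l2*gam)) z S β
        ha1 ha2 hd1 hd2 hc
        (Or.inl ⟨hS1, le_of_eq hs1, hwS⟩) (Or.inr ⟨hS2, rfl⟩) hstat hβ
    · by_cases H3 : d1 + d2 ≤ |z|
      · -- Case 3
        have hz0 : z ≠ 0 := by
          intro h; rw [h, abs_zero] at H3; linarith
        set s := Real.sign z with hsdef
        have hsz : s * |z| = z := sign_mul_abs' z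
        have hs : s = -1 ∨ s = 1 := Real.sign_apply_eq_of_ne_zero z hz0
        have hss : s * s = 1 := by rcases hs with h | h <;> rw [h] <;> norm_num
        have hs1 : |s| = 1 := by rcases hs with h | h <;> rw [h] <;> norm_num
        have hden : 0 < 1 - d1/(l1*gam) - d2/(l2*gam) := by linarith
        set S := s * (|z| - d1 - d2) / (1 - d1/(l1*gam) - d2/(l2*gam)) with hSdef2
        have hSeq : cmenetThreshold l1 l2 d1 d2 gam z = S := by
          unfold cmenetThreshold; rw [if_neg H1, if_neg H2, if_pos H3]
        rw [hSeq] at hβ ⊢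
        have hnum : 0 ≤ |z| - d1 - d2 := by linarith
        have habsS : |S| = (|z| - d1 - d2) / (1 - d1/(l1*gam) - d2/(l2*gam)) := by
          rw [hSdef2, abs_div, abs_mul, hs1, one_mul, abs_of_nonneg hnum,
            abs_of_pos hden]
        have exp2 : (l2*gam) * (1 - d1/(l1*gam) - d2/(l2*gam))
            = l2*gam - d1*(l2/l1) - d2 := by
          field_simp
        have hzlt : |z| < l2*gam + d1*(1 - l2/l1) := not_le.mp H2
        have hS2 : |S| ≤ l2 * gam := by
          rw [habsS, div_le_iff₀ hden, mul_comm]; linarith [exp2, hzlt]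
        have hS1 : |S| ≤ l1 * gam := le_trans hS2 ha21
        have hwS : s * S = |S| := by
          rw [habsS, hSdef2, show s * (s * (|z| - d1 - d2) / (1 - d1/(l1*gam) - d2/(l2*gam)))
            = (s*s) * ((|z| - d1 - d2) / (1 - d1/(l1*gam) - d2/(l2*gam))) by ring, hss, one_mul]
        have hstat : z = (1 - d1/(l1*gam) - d2/(l2*gam))*S + d1*s + d2*s := by
          have k2 : (1 - d1/(l1*gam) - d2/(l2*gam))*S = s*(|z| - d1 - d2) := by
            rw [hSdef2, mul_comm, div_mul_cancel₀ _ (ne_of_gt hden)]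
          rw [k2, show s*(|z| - d1 - d2) + d1*s + d2*s = s*|z| by ring, hsz]
        exact master (l1*gam) (l2*gam) d1 d2 s s z S β
          ha1 ha2 hd1 hd2 hc
          (Or.inl ⟨hS1, le_of_eq hs1, hwS⟩) (Or.inl ⟨hS2, le_of_eq hs1, hwS⟩) hstat hβ
      · -- Case 4 : S = 0
        have hSeq : cmenetThreshold l1 l2 d1 d2 gam z = 0 := by
          unfold cmenetThreshold; rw [if_neg H1, if_neg H2, if_neg H3]
        rw [hSeq] at hβ ⊢
        have hzlt : |z| < d1 + d2 := not_le.mp H3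
        have hdd : (0:ℝ) < d1 + d2 := by linarith
        have hw1 : |z/(d1+d2)| ≤ 1 := by
          rw [abs_div, abs_of_pos hdd, div_le_one hdd]; linarith
        have hA : ∀ a : ℝ, 0 < a → |(0:ℝ)| ≤ a ∧ |z/(d1+d2)| ≤ 1
            ∧ (z/(d1+d2)) * 0 = |(0:ℝ)| := by
          intro a hapos
          refine ⟨by simp [hapos.le], hw1, by simp⟩
        exact master (l1*gam) (l2*gam) d1 d2 (z/(d1+d2)) (z/(d1+d2)) z 0 β
          ha1 ha2 hd1 hd2 hc
          (Or.inl (hA _ ha1)) (Or.inl (hA _ ha2))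
          (by field_simp; ring) hβ
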